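/- arXiv:math/0411307 — 2 statements merged into one kernel-verified Lean document; each statement's English description precedes it below -/
import Mathlib

section
/- Let V be an odd-dimensional real inner product space and let F be a commuting family of skew-symmetric endomorphisms of V. Then there exists a nonzero vector Z in V annihilated by every element of F. -/
/-!
Induction on `dim V`. If every operator of `F` vanishes, any nonzero vector works. Otherwise pick
`A ∈ F` with `A ≠ 0`. A skew-symmetric operator on an odd-dimensional space is singular, since
`det A = det Aᵀ = det (-A) = -det A`. Applied to the restriction of `A` to the `A`-invariant
subspace `(ker A)ᗮ`, on which `A` is injective, this shows that `(ker A)ᗮ` is even-dimensional,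
so `ker A` is a proper subspace of odd dimension. It is invariant under the commuting family `F`,
and the restrictions of `F` to it are again commuting and skew-symmetric.
-/

open Module Set
open scoped InnerProductSpace

namespace LinearMap

variable {V : Type*} [NormedAddCommGroup V] [InnerProductSpace ℝ V]

def IsSkewSymmetric (A : V →ₗ[ℝ] V) : Prop :=
  ∀ x y, ⟪A x, y⟫_ℝ = -⟪x, A y⟫_ℝ

theorem IsSkewSymmetric.restrict_invariant {A : V →ₗ[ℝ] V} (hA : A.IsSkewSymmetric)
    {W : Submodule ℝ V} (hW : MapsTo A W W) : (A.restrict hW).IsSkewSymmetric :=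
  fun x y => hA x y

theorem IsSkewSymmetric.adjoint_eq [FiniteDimensional ℝ V] {A : V →ₗ[ℝ] V}
    (hA : A.IsSkewSymmetric) : adjoint A = -A :=
  ((eq_adjoint_iff (-A) A).2 fun x y => by simp [hA x y]).symm

theorem det_adjoint [FiniteDimensional ℝ V] (A : V →ₗ[ℝ] V) :
    LinearMap.det (adjoint A) = LinearMap.det A := by
  let b := (stdOrthonormalBasis ℝ V).toBasis
  rw [← det_toMatrix b, ← det_toMatrix b, toMatrix_adjoint, Matrix.det_conjTranspose]
  rfl

theorem mapsTo_ker_of_commute {R M : Type*} [CommRing R] [AddCommGroup M] [Module R M]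
    {f g : M →ₗ[R] M} (h : Commute f g) : MapsTo g (ker f) (ker f) := fun x hx => by
  rw [SetLike.mem_coe, mem_ker] at hx ⊢
  rw [← Module.End.mul_apply, h.eq, Module.End.mul_apply, hx, map_zero]

theorem IsSkewSymmetric.det_eq_zero_of_odd_finrank [FiniteDimensional ℝ V] {A : V →ₗ[ℝ] V}
    (hA : A.IsSkewSymmetric) (hodd : Odd (finrank ℝ V)) : LinearMap.det A = 0 := by
  have h : LinearMap.det A = -LinearMap.det A :=
    calc LinearMap.det A = LinearMap.det (adjoint A) := (det_adjoint A).symm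
      _ = LinearMap.det ((-1 : ℝ) • A) := by rw [hA.adjoint_eq, neg_one_smul]
      _ = -LinearMap.det A := by rw [det_smul, hodd.neg_one_pow, neg_one_mul]
  linarith

theorem IsSkewSymmetric.ker_ne_bot_of_odd_finrank [FiniteDimensional ℝ V] {A : V →ₗ[ℝ] V}
    (hA : A.IsSkewSymmetric) (hodd : Odd (finrank ℝ V)) : ker A ≠ ⊥ :=
  (bot_lt_ker_of_det_eq_zero (hA.det_eq_zero_of_odd_finrank hodd)).ne'

theorem IsSkewSymmetric.mapsTo_orthogonal_ker {A : V →ₗ[ℝ] V} (hA : A.IsSkewSymmetric) :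
    MapsTo A (ker A)ᗮ (ker A)ᗮ := fun x hx => by
  rw [SetLike.mem_coe, Submodule.mem_orthogonal] at hx ⊢
  intro k hk
  rw [← neg_eq_zero, ← hA k x, mem_ker.mp hk, inner_zero_left]

theorem IsSkewSymmetric.odd_finrank_ker [FiniteDimensional ℝ V] {A : V →ₗ[ℝ] V}
    (hA : A.IsSkewSymmetric) (hodd : Odd (finrank ℝ V)) : Odd (finrank ℝ (ker A)) := by
  have hinj : ker (A.restrict hA.mapsTo_orthogonal_ker) = ⊥ := by
    refine (ker_eq_bot').2 fun x hx => ?_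
    have hxK : (x : V) ∈ ker A := congrArg Subtype.val hx
    exact Subtype.ext ((Submodule.orthogonal_disjoint _).le_bot ⟨hxK, x.2⟩)
  have heven : Even (finrank ℝ (ker A)ᗮ) := by
    by_contra h
    exact (hA.restrict_invariant _).ker_ne_bot_of_odd_finrank (Nat.not_even_iff_odd.mp h) hinj
  rw [← (ker A).finrank_add_finrank_orthogonal] at hodd
  exact (Nat.odd_add.mp hodd).mpr heven

theorem exists_ne_zero_forall_apply_eq_zero_of_odd_finrank [FiniteDimensional ℝ V]
    (hodd : Odd (finrank ℝ V)) (F : Set (V →ₗ[ℝ] V)) (hskew : ∀ A ∈ F, A.IsSkewSymmetric)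
    (hcomm : ∀ A ∈ F, ∀ B ∈ F, Commute A B) : ∃ Z : V, Z ≠ 0 ∧ ∀ A ∈ F, A Z = 0 := by
  induction h : finrank ℝ V using Nat.strong_induction_on generalizing V with
  | _ n ih =>
  by_cases hF : ∀ A ∈ F, A = 0
  · have : Nontrivial V := Module.nontrivial_of_finrank_pos hodd.pos
    obtain ⟨Z, hZ⟩ := exists_ne (0 : V)
    exact ⟨Z, hZ, fun A hA => by simp [hF A hA]⟩
  push Not at hF
  obtain ⟨A, hAF, hA0⟩ := hF
  have hK : ∀ B ∈ F, MapsTo B (ker A) (ker A) := fun B hB =>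
    mapsTo_ker_of_commute (hcomm A hAF B hB)
  have hlt : finrank ℝ (ker A) < n := h ▸ Submodule.finrank_lt (mt ker_eq_top.mp hA0)
  obtain ⟨Z, hZ0, hZ⟩ := ih _ hlt ((hskew A hAF).odd_finrank_ker hodd)
    (Set.range fun B : F => (B : V →ₗ[ℝ] V).restrict (hK B B.2))
    (by rintro _ ⟨B, rfl⟩; exact (hskew B B.2).restrict_invariant _)
    (by rintro _ ⟨B, rfl⟩ _ ⟨C, rfl⟩; exact restrict_commute (hcomm B B.2 C C.2) _ _) rfl
  exact ⟨Z, by simpa using hZ0, fun B hB => congrArg Subtype.val (hZ _ ⟨⟨B, hB⟩, rfl⟩)⟩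

end LinearMap

/-- On an odd-dimensional real inner product space, a commuting family of
skew-symmetric endomorphisms has a common nonzero kernel vector. -/
theorem stmt0 {V : Type*} [NormedAddCommGroup V] [InnerProductSpace ℝ V]
    [FiniteDimensional ℝ V] (hodd : Odd (Module.finrank ℝ V))
    (F : Set (V →ₗ[ℝ] V))
    (hskew : ∀ A ∈ F, ∀ x y : V, (inner ℝ (A x) y : ℝ) = -(inner ℝ x (A y) : ℝ))
    (hcomm : ∀ A ∈ F, ∀ B ∈ F, A ∘ₗ B = B ∘ₗ A) :
    ∃ Z : V, Z ≠ 0 ∧ ∀ A ∈ F, A Z = 0 :=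
  LinearMap.exists_ne_zero_forall_apply_eq_zero_of_odd_finrank hodd F hskew hcomm
end

section
/- Let G_θ = R^q ⋉_θ H^q with the left action of L = R^q (acting by (T,(X,W)) ↦ (T+X, θ(T)W), θ invertible q×q) and the torus action φ(B)(X,W) = (X, BW) where B multiplies W_β on the left by e^{iφ_β}. An orbit L·(X,W) with (X,W) ∈ μ_θ^{-1}(0) is fixed by every φ(B) if and only if W = 0 and the orbit equals L·(0,0); hence the torus action on L\μ_θ^{-1}(0) has a unique fixed point. -/
open Quaternion

/-- The quaternion i. -/
def qI : ℍ[ℝ] := ⟨0, 1, 0, 0⟩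

/-- The quaternion e^{it} = cos t + i sin t. -/
noncomputable def eI (t : ℝ) : ℍ[ℝ] := ⟨Real.cos t, Real.sin t, 0, 0⟩

/-- The left action of L = R^q on G_θ = H^q ⋉_θ H^q:
(T,(X,W)) ↦ (T + X, θ(T)W). -/
noncomputable def actL (q : ℕ) (θ : Fin q → Fin q → ℝ) (T : Fin q → ℝ)
    (s : (Fin q → ℍ[ℝ]) × (Fin q → ℍ[ℝ])) :
    (Fin q → ℍ[ℝ]) × (Fin q → ℍ[ℝ]) :=
  (fun α => ((T α : ℝ) : ℍ[ℝ]) + s.1 α,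
   fun β => eI (∑ α, T α * θ β α) * s.2 β)

/-- The torus action φ(B)(X,W) = (X, BW), multiplying W_β on the left
by e^{iφ_β}. -/
noncomputable def torusAct (q : ℕ) (B : Fin q → ℝ)
    (s : (Fin q → ℍ[ℝ]) × (Fin q → ℍ[ℝ])) :
    (Fin q → ℍ[ℝ]) × (Fin q → ℍ[ℝ]) :=
  (s.1, fun β => eI (B β) * s.2 β)

/-- The imaginary part of a quaternion, as a quaternion. -/
def qIm (x : ℍ[ℝ]) : ℍ[ℝ] := ⟨0, x.imI, x.imJ, x.imK⟩

/-- The hyper-Kähler moment map with l = p = q. -/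
noncomputable def momentMap (q : ℕ) (θ : Fin q → Fin q → ℝ)
    (s : (Fin q → ℍ[ℝ]) × (Fin q → ℍ[ℝ])) : Fin q → ℍ[ℝ] :=
  fun α => -qIm (s.1 α) +
    (1 / 2 : ℝ) • ∑ β, θ β α • (star (s.2 β) * qI * s.2 β)

lemma eI_zero : eI 0 = 1 := by
  ext <;> simp [eI]

lemma eI_pi : eI Real.pi = -1 := by
  ext <;> simp [eI]

/-- For θ invertible, an orbit L·(X,W) in μ_θ⁻¹(0) is fixed by the whole torus
iff W = 0 and the orbit is the orbit of (0,0); hence the induced torus action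
on L \ μ_θ⁻¹(0) has a unique fixed point. -/
theorem stmt17 (q : ℕ) (θ : Fin q → Fin q → ℝ)
    (hθ : (Matrix.of θ).det ≠ 0)
    (s : (Fin q → ℍ[ℝ]) × (Fin q → ℍ[ℝ]))
    (hs : momentMap q θ s = 0) :
    (∀ B : Fin q → ℝ, ∃ T : Fin q → ℝ, actL q θ T s = torusAct q B s) ↔
      (s.2 = 0 ∧ ∃ T : Fin q → ℝ, actL q θ T s = (0, 0)) := by
  constructor
  · intro h
    -- first, W = 0
    obtain ⟨T, hT⟩ := h (fun _ => Real.pi)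
    have h1 := congrArg Prod.fst hT
    have h2 := congrArg Prod.snd hT
    simp only [actL, torusAct] at h1 h2
    have hT0 : ∀ α, T α = 0 := by
      intro α
      have := congrFun h1 α
      have h0 : ((T α : ℝ) : ℍ[ℝ]) = 0 := by
        have := add_right_cancel (b := s.1 α) (by simpa using this)
        simpa using this
      have := congrArg QuaternionAlgebra.re h0
      simpa using this
    have hW : s.2 = 0 := by
      funext β
      have := congrFun h2 β
      simp only [hT0, zero_mul, Finset.sum_const_zero, eI_zero, one_mul, eI_pi,
        neg_one_mul] at this
      have h4 : (2 : ℝ) • s.2 β = 0 := by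
        rw [two_smul, ← eq_neg_iff_add_eq_zero]; exact this
      rcases smul_eq_zero.mp h4 with h5 | h5
      · norm_num at h5
      · simpa using h5
    refine ⟨hW, ⟨fun α => -(s.1 α).re, ?_⟩⟩
    -- from the moment map, X is real
    have hIm : ∀ α, qIm (s.1 α) = 0 := by
      intro α
      have := congrFun hs α
      simp only [momentMap, hW, Pi.zero_apply, star_zero, mul_zero, smul_zero,
        Finset.sum_const_zero, add_zero, neg_eq_zero] at this
      exact this
    ext1
    · funext α
      have h3 := hIm α
      rw [qIm] at h3
      have hi := congrArg QuaternionAlgebra.imI h3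
      have hj := congrArg QuaternionAlgebra.imJ h3
      have hk := congrArg QuaternionAlgebra.imK h3
      clear h3
      simp only [actL]
      ext <;> simp_all
    · funext β
      simp [actL, hW]
  · rintro ⟨hW, -⟩ B
    refine ⟨0, ?_⟩
    ext1
    · funext α; simp [actL, torusAct]
    · funext β; simp [actL, torusAct, hW]
end
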